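/- For any nonzero vectors k, ξ in ℝ³ and any v in ℂ³, the orthogonal projections away from ξ and k satisfy |P⊥_ξ v − P⊥_k v| ≤ 2|v||ξ+k|/|k|, where P⊥_ξ v = v − |ξ|⁻²(v·ξ)ξ. -/

import Mathlib

open scoped BigOperators

noncomputable section

/-- The ℝ³ vector `ξ` viewed as a vector in ℂ³. -/
def toC3 (ξ : EuclideanSpace ℝ (Fin 3)) : EuclideanSpace ℂ (Fin 3) :=
  WithLp.toLp 2 (fun j => (ξ j : ℂ))

/-- Bilinear (non-Hermitian) dot product of `v ∈ ℂ³` with `ξ ∈ ℝ³`. -/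
def dotRC (v : EuclideanSpace ℂ (Fin 3)) (ξ : EuclideanSpace ℝ (Fin 3)) : ℂ :=
  ∑ j, v j * (ξ j : ℂ)

/-- The projection `P⊥_ξ v = v − |ξ|⁻²(v·ξ)ξ`. -/
def Pperp (ξ : EuclideanSpace ℝ (Fin 3)) (v : EuclideanSpace ℂ (Fin 3)) :
    EuclideanSpace ℂ (Fin 3) :=
  v - (((‖ξ‖ : ℂ) ^ 2)⁻¹ * dotRC v ξ) • toC3 ξ

open scoped InnerProductSpace

lemma toC3_sub (x y : EuclideanSpace ℝ (Fin 3)) : toC3 (x - y) = toC3 x - toC3 y := by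
  ext j; simp [toC3]

lemma toC3_add (x y : EuclideanSpace ℝ (Fin 3)) : toC3 (x + y) = toC3 x + toC3 y := by
  ext j; simp [toC3]

lemma toC3_smul (r : ℝ) (x : EuclideanSpace ℝ (Fin 3)) :
    toC3 (r • x) = (r : ℂ) • toC3 x := by
  ext j; simp [toC3]

lemma toC3_norm (x : EuclideanSpace ℝ (Fin 3)) : ‖toC3 x‖ = ‖x‖ := by
  simp [EuclideanSpace.norm_eq, toC3]

lemma dotRC_inner (v : EuclideanSpace ℂ (Fin 3)) (ξ : EuclideanSpace ℝ (Fin 3)) :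
    dotRC v ξ = ⟪toC3 ξ, v⟫_ℂ := by
  simp [dotRC, toC3, PiLp.inner_apply, RCLike.inner_apply, mul_comm]

lemma Pperp_eq (ξ : EuclideanSpace ℝ (Fin 3)) (hξ : ξ ≠ 0) (v : EuclideanSpace ℂ (Fin 3)) :
    Pperp ξ v = v - ⟪toC3 (‖ξ‖⁻¹ • ξ), v⟫_ℂ • toC3 (‖ξ‖⁻¹ • ξ) := by
  have hx : (‖ξ‖ : ℂ) ≠ 0 := by
    simpa using (norm_ne_zero_iff.mpr hξ)
  rw [Pperp, toC3_smul, dotRC_inner, inner_smul_left, Complex.conj_ofReal]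
  rw [smul_smul, Complex.ofReal_inv]
  ring_nf

lemma geo_aux (p q r A B S : ℝ) (hp : 0 < p) (hq : 0 < q)
    (hA : A ^ 2 = 2 - 2 * (p⁻¹ * (q⁻¹ * r)))
    (hB : B ^ 2 = 2 + 2 * (p⁻¹ * (q⁻¹ * r)))
    (hS : S ^ 2 = p ^ 2 + 2 * r + q ^ 2)
    (hA0 : 0 ≤ A) (hB0 : 0 ≤ B) (hS0 : 0 ≤ S) :
    A * B ≤ 2 * S / q := by
  have hsq : (A * B) ^ 2 ≤ (2 * S / q) ^ 2 := by
    rw [mul_pow, hA, hB, div_pow, mul_pow, hS, le_div_iff₀ (by positivity)]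
    have hexp : (2 - 2 * (p⁻¹ * (q⁻¹ * r))) * (2 + 2 * (p⁻¹ * (q⁻¹ * r))) * q ^ 2 * p ^ 2
        = 4 * p ^ 2 * q ^ 2 - 4 * r ^ 2 := by
      field_simp
      ring
    have hpos : (0:ℝ) < p ^ 2 := by positivity
    rw [← mul_le_mul_iff_of_pos_right hpos, hexp]
    nlinarith [sq_nonneg (p ^ 2 + r)]
  calc A * B = Real.sqrt ((A * B) ^ 2) := by rw [Real.sqrt_sq (by positivity)]
    _ ≤ Real.sqrt ((2 * S / q) ^ 2) := Real.sqrt_le_sqrt hsq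
    _ = 2 * S / q := Real.sqrt_sq (by positivity)

theorem pperp_difference_bound (k ξ : EuclideanSpace ℝ (Fin 3)) (hk : k ≠ 0) (hξ : ξ ≠ 0)
    (v : EuclideanSpace ℂ (Fin 3)) :
    ‖Pperp ξ v - Pperp k v‖ ≤ 2 * ‖v‖ * ‖ξ + k‖ / ‖k‖ := by
  have hx : (0:ℝ) < ‖ξ‖ := norm_pos_iff.mpr hξ
  have hy : (0:ℝ) < ‖k‖ := norm_pos_iff.mpr hk
  set ξ' : EuclideanSpace ℝ (Fin 3) := ‖ξ‖⁻¹ • ξ with hξ'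
  set k' : EuclideanSpace ℝ (Fin 3) := ‖k‖⁻¹ • k with hk'
  set a : EuclideanSpace ℂ (Fin 3) := toC3 ξ' with ha
  set b : EuclideanSpace ℂ (Fin 3) := toC3 k' with hb
  have hξ'n : ‖ξ'‖ = 1 := by
    rw [hξ', norm_smul]; simp [abs_of_pos (inv_pos.mpr hx), inv_mul_cancel₀ hx.ne']
  have hk'n : ‖k'‖ = 1 := by
    rw [hk', norm_smul]; simp [abs_of_pos (inv_pos.mpr hy), inv_mul_cancel₀ hy.ne']
  -- the difference in terms of the unit vectors
  have hD : Pperp ξ v - Pperp k v = ⟪b, v⟫_ℂ • b - ⟪a, v⟫_ℂ • a := by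
    rw [Pperp_eq ξ hξ v, Pperp_eq k hk v, ← ha, ← hb]
    abel
  set α : ℂ := ⟪a, v⟫_ℂ with hα
  set β : ℂ := ⟪b, v⟫_ℂ with hβ
  have hkey : β • b - α • a
      = -((2⁻¹ : ℂ) • ((α + β) • (a - b) + (α - β) • (a + b))) := by
    module
  have hu : ‖a - b‖ = ‖ξ' - k'‖ := by rw [ha, hb, ← toC3_sub, toC3_norm]
  have hw : ‖a + b‖ = ‖ξ' + k'‖ := by rw [ha, hb, ← toC3_add, toC3_norm]
  have hsum : ‖α - β‖ ≤ ‖a - b‖ * ‖v‖ := by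
    have h1 : α - β = ⟪a - b, v⟫_ℂ := by rw [inner_sub_left]
    rw [h1]
    exact norm_inner_le_norm _ _
  have hsum' : ‖α + β‖ ≤ ‖a + b‖ * ‖v‖ := by
    have h1 : α + β = ⟪a + b, v⟫_ℂ := by rw [inner_add_left]
    rw [h1]
    exact norm_inner_le_norm _ _
  -- bound the difference by ‖a-b‖‖a+b‖‖v‖
  have hbound : ‖Pperp ξ v - Pperp k v‖ ≤ ‖ξ' - k'‖ * ‖ξ' + k'‖ * ‖v‖ := by
    rw [hD, hkey, norm_neg, norm_smul]
    have h1 : ‖(2⁻¹ : ℂ)‖ = 2⁻¹ := by norm_num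
    rw [h1]
    calc 2⁻¹ * ‖(α + β) • (a - b) + (α - β) • (a + b)‖
        ≤ 2⁻¹ * (‖(α + β) • (a - b)‖ + ‖(α - β) • (a + b)‖) := by
          gcongr; exact norm_add_le _ _
      _ = 2⁻¹ * (‖α + β‖ * ‖a - b‖ + ‖α - β‖ * ‖a + b‖) := by
          rw [norm_smul, norm_smul]
      _ ≤ 2⁻¹ * ((‖a + b‖ * ‖v‖) * ‖a - b‖ + (‖a - b‖ * ‖v‖) * ‖a + b‖) := by
          gcongr
      _ = ‖ξ' - k'‖ * ‖ξ' + k'‖ * ‖v‖ := by rw [hu, hw]; ring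
  -- the geometric estimate
  set r : ℝ := ⟪ξ, k⟫_ℝ with hr
  have hrin : ⟪ξ', k'⟫_ℝ = ‖ξ‖⁻¹ * (‖k‖⁻¹ * r) := by
    rw [hξ', hk', real_inner_smul_left, real_inner_smul_right]
  have hu2 : ‖ξ' - k'‖ ^ 2 = 2 - 2 * (‖ξ‖⁻¹ * (‖k‖⁻¹ * r)) := by
    rw [← hrin, norm_sub_sq_real, hξ'n, hk'n]; ring
  have hw2 : ‖ξ' + k'‖ ^ 2 = 2 + 2 * (‖ξ‖⁻¹ * (‖k‖⁻¹ * r)) := by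
    rw [← hrin, norm_add_sq_real, hξ'n, hk'n]; ring
  have hs2 : ‖ξ + k‖ ^ 2 = ‖ξ‖ ^ 2 + 2 * r + ‖k‖ ^ 2 := by
    rw [norm_add_sq_real]
  have hgeo : ‖ξ' - k'‖ * ‖ξ' + k'‖ ≤ 2 * ‖ξ + k‖ / ‖k‖ :=
    geo_aux ‖ξ‖ ‖k‖ r _ _ _ hx hy hu2 hw2 hs2 (norm_nonneg _) (norm_nonneg _)
      (norm_nonneg _)
  calc ‖Pperp ξ v - Pperp k v‖ ≤ ‖ξ' - k'‖ * ‖ξ' + k'‖ * ‖v‖ := hbound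
    _ ≤ (2 * ‖ξ + k‖ / ‖k‖) * ‖v‖ := by gcongr
    _ = 2 * ‖v‖ * ‖ξ + k‖ / ‖k‖ := by ring

end
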